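/- arXiv:1703.01748 — 2 statements merged into one kernel-verified Lean document; each statement's English description precedes it below -/
import Mathlib

section
/- For any irrational real number α, the inequality |α − p/q| ≤ 1/(√5·q²) has infinitely many rational solutions p/q (p ∈ ℤ, q ∈ ℕ, q ≥ 1). -/
/-!
Let `ξₙ` be the complete quotients and `pₙ/qₙ` the convergents of the continued fraction of `α`.
Then `α - pₙ/qₙ = (-1)ⁿ / (xₙ qₙ²)` with `xₙ = ξₙ₊₁ + qₙ₋₁/qₙ`, so it suffices to find infinitely
many `n` with `xₙ ≥ √5`. With `u = ξₙ₊₂` and `v = qₙ₊₁/qₙ` the recursions give `xₙ = v + 1/u` and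
`xₙ₊₁ = u + 1/v`, and if both are `< √5` then `v < φ`. Failing at `n`, `n + 1` and `n + 2` would
therefore give both `qₙ₊₁/qₙ < φ` and `qₙ₊₂/qₙ₊₁ < φ`, which is impossible because
`qₙ₊₂/qₙ₊₁ ≥ 1 + qₙ/qₙ₊₁ > 1 + 1/φ = φ`.
-/

open Real
open scoped goldenRatio

theorem lt_goldenRatio_of_add_inv_lt_sqrt_five {u v : ℝ} (hu : 0 < u) (hv : 0 < v)
    (huv : u + v⁻¹ < √5) (hvu : v + u⁻¹ < √5) : v < φ := by
  have h5 : √5 ^ 2 = 5 := sq_sqrt (by norm_num)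
  have h₁ : u * v + 1 < √5 * v :=
    calc u * v + 1 = (u + v⁻¹) * v := by field_simp
      _ < √5 * v := by gcongr
  have h₂ : u * v + 1 < √5 * u :=
    calc u * v + 1 = (v + u⁻¹) * u := by field_simp
      _ < √5 * u := by gcongr
  have hv5 : 0 < √5 - v := by nlinarith
  -- eliminating `u` leaves `v² - √5 v + 1 < 0`, whose larger root is `φ`
  have hquad : v ^ 2 - √5 * v + 1 < 0 := by
    nlinarith [mul_lt_mul_of_pos_left h₁ hv5, mul_lt_mul_of_pos_left h₂ hv]
  by_contra! h
  unfold goldenRatio at h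
  nlinarith [mul_nonneg (sub_nonneg.2 h) (by linarith : (0:ℝ) ≤ v - (1 + √5) / 2 + 1)]

theorem goldenRatio_lt_one_add_inv {v : ℝ} (hv : 0 < v) (h : v < φ) : φ < 1 + v⁻¹ :=
  calc φ = 1 + φ⁻¹ := by rw [inv_goldenRatio, ← sub_eq_add_neg, one_sub_goldenRatio]
    _ < 1 + v⁻¹ := by gcongr

theorem Irrational.infinite_of_forall_exists_abs_sub_lt {α : ℝ} (hα : Irrational α) {s : Set ℚ}
    (h : ∀ ε > 0, ∃ r ∈ s, |α - r| < ε) : s.Infinite := by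
  intro hs
  have hα_mem : α ∈ closure (((↑) : ℚ → ℝ) '' s) :=
    Metric.mem_closure_iff.2 fun ε hε => by
      obtain ⟨r, hr, hlt⟩ := h ε hε
      exact ⟨r, ⟨r, hr, rfl⟩, by rwa [Real.dist_eq]⟩
  rw [(hs.image _).isClosed.closure_eq] at hα_mem
  obtain ⟨r, -, hr⟩ := hα_mem
  exact hα ⟨r, hr⟩

namespace RealContFrac

noncomputable def completeQuot (α : ℝ) : ℕ → ℝ
  | 0 => α
  | n + 1 => (Int.fract (completeQuot α n))⁻¹

noncomputable def partialQuot (α : ℝ) (n : ℕ) : ℤ := ⌊completeQuot α n⌋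

noncomputable def continuant (α : ℝ) (s₀ s₁ : ℤ) : ℕ → ℤ
  | 0 => s₀
  | 1 => s₁
  | n + 2 => partialQuot α (n + 1) * continuant α s₀ s₁ (n + 1) + continuant α s₀ s₁ n

/- Indices are shifted by one: `num α (n + 1) / den α (n + 1)` is the classical convergent
`pₙ / qₙ`, and `num α 0 / den α 0 = 1 / 0` plays the role of `p₋₁ / q₋₁`. -/
noncomputable abbrev num (α : ℝ) : ℕ → ℤ := continuant α 1 (partialQuot α 0)

noncomputable abbrev den (α : ℝ) : ℕ → ℤ := continuant α 0 1

noncomputable def approxConst (α : ℝ) (n : ℕ) : ℝ :=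
  completeQuot α (n + 1) + den α n / den α (n + 1)

theorem completeQuot_eq_partialQuot_add_inv (α : ℝ) (n : ℕ) :
    completeQuot α n = partialQuot α n + (completeQuot α (n + 1))⁻¹ := by
  rw [completeQuot, inv_inv, partialQuot, Int.floor_add_fract]

theorem continuant_mul_sub_mul (α : ℝ) (s₀ s₁ t₀ t₁ : ℤ) (n : ℕ) :
    continuant α s₀ s₁ (n + 1) * continuant α t₀ t₁ n
      - continuant α s₀ s₁ n * continuant α t₀ t₁ (n + 1) = (-1) ^ n * (s₁ * t₀ - s₀ * t₁) := by
  induction n with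
  | zero => simp [continuant]
  | succ n ih =>
    simp only [continuant, pow_succ]
    linear_combination (-1 : ℤ) * ih

section Irrational

variable {α : ℝ} (hα : Irrational α)
include hα

theorem irrational_completeQuot (n : ℕ) : Irrational (completeQuot α n) := by
  induction n with
  | zero => exact hα
  | succ n ih =>
    rw [completeQuot, ← Int.self_sub_floor]
    exact (ih.sub_intCast _).inv

theorem one_lt_completeQuot_succ (n : ℕ) : 1 < completeQuot α (n + 1) :=
  one_lt_inv_iff₀.mpr
    ⟨Int.fract_pos.mpr ((irrational_completeQuot hα n).ne_int _), Int.fract_lt_one _⟩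

theorem one_le_partialQuot_succ (n : ℕ) : 1 ≤ partialQuot α (n + 1) :=
  Int.le_floor.mpr (mod_cast (one_lt_completeQuot_succ hα n).le)

theorem completeQuot_mul_completeQuot_succ (n : ℕ) :
    completeQuot α n * completeQuot α (n + 1) = partialQuot α n * completeQuot α (n + 1) + 1 := by
  have := (zero_lt_one.trans (one_lt_completeQuot_succ hα n)).ne'
  rw [completeQuot_eq_partialQuot_add_inv α n]
  field_simp

theorem completeQuot_mul_continuant (s₀ s₁ : ℤ) (n : ℕ) :
    completeQuot α (n + 2) *
        (completeQuot α (n + 1) * continuant α s₀ s₁ (n + 1) + continuant α s₀ s₁ n) =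
      completeQuot α (n + 2) * continuant α s₀ s₁ (n + 2) + continuant α s₀ s₁ (n + 1) := by
  simp only [continuant]
  push_cast
  linear_combination
    (continuant α s₀ s₁ (n + 1) : ℝ) * completeQuot_mul_completeQuot_succ hα (n + 1)

theorem mul_completeQuot_mul_den_add (n : ℕ) :
    α * (completeQuot α (n + 1) * den α (n + 1) + den α n) =
      completeQuot α (n + 1) * num α (n + 1) + num α n := by
  induction n with
  | zero =>
    have h := completeQuot_mul_completeQuot_succ hα 0
    rw [show completeQuot α 0 = α from rfl] at h
    simp only [num, den, continuant]
    push_cast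
    linear_combination h
  | succ n ih =>
    linear_combination completeQuot α (n + 2) * ih - α * completeQuot_mul_continuant hα 0 1 n
      + completeQuot_mul_continuant hα 1 (partialQuot α 0) n

theorem one_le_den_succ : ∀ n, 1 ≤ den α (n + 1)
  | 0 => le_rfl
  | 1 => by simpa [continuant] using one_le_partialQuot_succ hα 0
  | n + 2 => by
    have := one_le_den_succ n
    have := one_le_den_succ (n + 1)
    have := one_le_partialQuot_succ hα (n + 1)
    show 1 ≤ partialQuot α (n + 2) * den α (n + 2) + den α (n + 1)
    nlinarith

theorem den_succ_add_den_le (n : ℕ) : den α (n + 2) + den α (n + 1) ≤ den α (n + 3) := by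
  have := one_le_den_succ hα (n + 1)
  have := one_le_partialQuot_succ hα (n + 1)
  show _ ≤ partialQuot α (n + 2) * den α (n + 2) + den α (n + 1)
  nlinarith

theorem le_den_succ : ∀ n : ℕ, (n : ℤ) ≤ den α (n + 1)
  | 0 => zero_le_one
  | 1 => one_le_den_succ hα 1
  | n + 2 => by
    have h₁ : ((n + 1 : ℕ) : ℤ) ≤ den α (n + 2) := le_den_succ (n + 1)
    have := one_le_den_succ hα n
    have := den_succ_add_den_le hα n
    push_cast at h₁ ⊢
    linarith

theorem den_nonneg : ∀ n, 0 ≤ den α n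
  | 0 => le_rfl
  | n + 1 => zero_le_one.trans (one_le_den_succ hα n)

theorem den_succ_pos (n : ℕ) : (0 : ℝ) < den α (n + 1) := by
  exact_mod_cast zero_lt_one.trans_le (one_le_den_succ hα n)

theorem approxConst_mul_den_succ (n : ℕ) :
    approxConst α n * den α (n + 1) = completeQuot α (n + 1) * den α (n + 1) + den α n := by
  have := (den_succ_pos hα n).ne'
  rw [approxConst]
  field_simp

theorem approxConst_pos (n : ℕ) : 0 < approxConst α n :=
  add_pos_of_pos_of_nonneg (zero_lt_one.trans (one_lt_completeQuot_succ hα n))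
    (div_nonneg (mod_cast den_nonneg hα n) (den_succ_pos hα n).le)

theorem sub_num_div_den (n : ℕ) :
    α - num α (n + 1) / den α (n + 1) = (-1) ^ n / (approxConst α n * den α (n + 1) ^ 2) := by
  have hQ := (den_succ_pos hα n).ne'
  have hA := (approxConst_pos hα n).ne'
  have hdet : (num α (n + 1) * den α n - num α n * den α (n + 1) : ℝ) = -(-1) ^ n := by
    have := continuant_mul_sub_mul α 1 (partialQuot α 0) 0 1 n
    simp only [mul_zero, zero_sub, mul_neg, mul_one] at this
    exact_mod_cast this
  have hD := approxConst_mul_den_succ hα n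
  have hval := mul_completeQuot_mul_den_add hα n
  rw [← hD] at hval
  field_simp
  linear_combination den α (n + 1) * hval - hdet - num α (n + 1) * hD

theorem abs_sub_num_div_den_le (n : ℕ) (h : √5 ≤ approxConst α n) :
    |α - num α (n + 1) / den α (n + 1)| ≤ 1 / (√5 * den α (n + 1) ^ 2) := by
  have hQ := den_succ_pos hα n
  rw [sub_num_div_den hα n, abs_div, abs_neg_one_pow,
    abs_of_pos (mul_pos (approxConst_pos hα n) (pow_pos hQ 2))]
  gcongr

theorem approxConst_eq_div_add_inv (n : ℕ) :
    approxConst α n = den α (n + 2) / den α (n + 1) + (completeQuot α (n + 2))⁻¹ := by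
  have := (den_succ_pos hα n).ne'
  rw [approxConst, completeQuot_eq_partialQuot_add_inv α (n + 1)]
  simp only [continuant]
  push_cast
  field_simp
  ring

theorem div_den_lt_goldenRatio (n : ℕ) (h₀ : approxConst α n < √5)
    (h₁ : approxConst α (n + 1) < √5) : (den α (n + 2) / den α (n + 1) : ℝ) < φ := by
  rw [approxConst_eq_div_add_inv hα] at h₀
  rw [approxConst, ← inv_div] at h₁
  exact lt_goldenRatio_of_add_inv_lt_sqrt_five
    (zero_lt_one.trans (one_lt_completeQuot_succ hα (n + 1)))
    (div_pos (den_succ_pos hα (n + 1)) (den_succ_pos hα n)) h₁ h₀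

theorem one_add_inv_le_div_den (n : ℕ) :
    1 + (den α (n + 2) / den α (n + 1) : ℝ)⁻¹ ≤ den α (n + 3) / den α (n + 2) := by
  have hQ := den_succ_pos hα (n + 1)
  rw [inv_div, le_div_iff₀ hQ, add_mul, one_mul, div_mul_cancel₀ _ hQ.ne']
  exact_mod_cast den_succ_add_den_le hα n

theorem exists_sqrt_five_le_approxConst (n : ℕ) : ∃ m, n ≤ m ∧ √5 ≤ approxConst α m := by
  by_contra! h
  have h₀ := div_den_lt_goldenRatio hα n (h n le_rfl) (h (n + 1) (by omega))
  have h₁ := div_den_lt_goldenRatio hα (n + 1) (h (n + 1) (by omega)) (h (n + 2) (by omega))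
  have h₂ := goldenRatio_lt_one_add_inv
    (div_pos (den_succ_pos hα (n + 1)) (den_succ_pos hα n)) h₀
  have h₃ := one_add_inv_le_div_den hα n
  linarith

end Irrational

end RealContFrac

open RealContFrac in
/-- **Hurwitz's theorem (first part).** For any irrational real number `α`, the inequality
`|α - p/q| ≤ 1/(√5 q²)` has infinitely many rational solutions `p/q`
(`p ∈ ℤ`, `q ∈ ℕ`, `q ≥ 1`). -/
theorem hurwitz_infinitely_many_rational_approximations (α : ℝ) (hα : Irrational α) :
    {r : ℚ | ∃ (p : ℤ) (q : ℕ), 1 ≤ q ∧ (r : ℝ) = (p : ℝ) / (q : ℝ) ∧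
      |α - (p : ℝ) / (q : ℝ)| ≤ 1 / (Real.sqrt 5 * (q : ℝ) ^ 2)}.Infinite := by
  refine hα.infinite_of_forall_exists_abs_sub_lt fun ε hε => ?_
  obtain ⟨N, hN⟩ := exists_nat_gt ε⁻¹
  obtain ⟨m, hNm, hm⟩ := exists_sqrt_five_le_approxConst hα N
  obtain ⟨q, hq⟩ := Int.eq_ofNat_of_zero_le (den_nonneg hα (m + 1))
  have hq₁ : 1 ≤ q := by exact_mod_cast hq ▸ one_le_den_succ hα m
  have hNq : N ≤ q := hNm.trans (by exact_mod_cast hq ▸ le_den_succ hα m)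
  have hbound := abs_sub_num_div_den_le hα m hm
  rw [hq] at hbound
  push_cast at hbound
  refine ⟨num α (m + 1) / q, ⟨num α (m + 1), q, hq₁, by push_cast; rfl, hbound⟩, ?_⟩
  calc |α - ((num α (m + 1) / q : ℚ) : ℝ)| ≤ 1 / (√5 * q ^ 2) := by push_cast; exact hbound
    _ ≤ 1 / q := by
      gcongr
      nlinarith [one_le_sqrt.2 (by norm_num : (1 : ℝ) ≤ 5), (Nat.one_le_cast.2 hq₁ : (1 : ℝ) ≤ q)]
    _ < ε := by rw [one_div]; exact inv_lt_of_inv_lt₀ hε (hN.trans_le (mod_cast hNq))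
end

section
/- For every ε > 0, the inequality |(1+√5)/2 − p/q| ≤ 1/((√5+ε)·q²) has only finitely many rational solutions p/q (p ∈ ℤ, q ∈ ℕ, q ≥ 1). -/
/-!
Since `φ` and `ψ` are irrational roots of `x² - x - 1`, for every `p / q` the product
`|φ - p/q| · |ψ - p/q| = |p² - pq - q²| / q²` is at least `1 / q²`. If `p / q` is within
`1 / ((√5 + ε) q²)` of `φ`, then it is within `√5 + 1 / ((√5 + ε) q²)` of `ψ`, and comparing
with the lower bound forces `ε (√5 + ε) q² ≤ 1`. So the denominators are bounded, and the
numerators are then bounded as well.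
-/

open Real goldenRatio

theorem sub_goldenRatio_mul_sub_goldenConj (x : ℝ) : (x - φ) * (x - ψ) = x ^ 2 - x - 1 := by
  linear_combination (-x) * goldenRatio_add_goldenConj + goldenRatio_mul_goldenConj

theorem sq_sub_mul_sub_sq_ne_zero (p : ℤ) {q : ℤ} (hq : q ≠ 0) : p ^ 2 - p * q - q ^ 2 ≠ 0 := by
  intro h
  have hroot : ((p / q : ℚ) : ℝ) ^ 2 - (p / q : ℚ) - 1 = 0 := by
    have hq' : (q : ℝ) ≠ 0 := by exact_mod_cast hq
    have h' : (p : ℝ) ^ 2 - p * q - q ^ 2 = 0 := by exact_mod_cast h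
    push_cast
    field_simp
    linear_combination h'
  rw [← sub_goldenRatio_mul_sub_goldenConj, mul_eq_zero, sub_eq_zero, sub_eq_zero] at hroot
  rcases hroot with hφ | hψ
  · exact goldenRatio_irrational ⟨_, hφ⟩
  · exact goldenConj_irrational ⟨_, hψ⟩

theorem one_div_sq_le_abs_goldenRatio_sub_mul_abs_goldenConj_sub (p : ℤ) {q : ℤ} (hq : q ≠ 0) :
    1 / (q : ℝ) ^ 2 ≤ |φ - p / q| * |ψ - p / q| := by
  have hq2 : (0 : ℝ) < (q : ℝ) ^ 2 := by positivity
  have hnum : (1 : ℝ) ≤ |(p : ℝ) ^ 2 - p * q - q ^ 2| := by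
    exact_mod_cast Int.one_le_abs (sq_sub_mul_sub_sq_ne_zero p hq)
  have hx : ((p : ℝ) / q) ^ 2 - p / q - 1 = ((p : ℝ) ^ 2 - p * q - q ^ 2) / (q : ℝ) ^ 2 := by
    field_simp
  have hprod : |φ - p / q| * |ψ - p / q| = |(p : ℝ) ^ 2 - p * q - q ^ 2| / (q : ℝ) ^ 2 := by
    rw [abs_sub_comm φ, abs_sub_comm ψ, ← abs_mul, sub_goldenRatio_mul_sub_goldenConj, hx,
      abs_div, abs_of_pos hq2]
  rw [hprod]
  gcongr

theorem mul_le_one_of_abs_sub_le {ξ η ε x Q : ℝ} (hε : 0 < ε) (hQ : 0 < Q)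
    (hprod : 1 / Q ≤ |ξ - x| * |η - x|) (happrox : |ξ - x| ≤ 1 / ((|ξ - η| + ε) * Q)) :
    ε * (|ξ - η| + ε) * Q ≤ 1 := by
  set c := |ξ - η|
  set δ := |ξ - x|
  set B := 1 / ((c + ε) * Q)
  have hc : 0 ≤ c := abs_nonneg _
  have hδ : 0 ≤ δ := abs_nonneg _
  have hB : 0 < B := by positivity
  have hη : |η - x| ≤ c + δ := by
    calc |η - x| = |(ξ - x) - (ξ - η)| := by ring_nf
      _ ≤ δ + c := abs_sub _ _
      _ = c + δ := add_comm _ _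
  have hBQ : B * (c + ε) = 1 / Q := by simp only [B]; field_simp
  have hεB : ε ≤ B := by
    have : B * (c + ε) ≤ B * (c + B) :=
      calc B * (c + ε) = 1 / Q := hBQ
        _ ≤ δ * (c + δ) := hprod.trans (mul_le_mul_of_nonneg_left hη hδ)
        _ ≤ B * (c + B) := by gcongr
    linarith [le_of_mul_le_mul_left this hB]
  calc ε * (c + ε) * Q ≤ B * ((c + ε) * Q) := by rw [mul_assoc]; gcongr
    _ = 1 := by simp only [B]; field_simp

theorem finite_setOf_rat_eq_div_of_abs_sub_le (ξ C : ℝ) (N : ℕ) :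
    {r : ℚ | ∃ (p : ℤ) (q : ℕ), 1 ≤ q ∧ q ≤ N ∧ (r : ℝ) = p / q ∧ |ξ - p / q| ≤ C}.Finite := by
  set M : ℤ := ⌈(|ξ| + C) * N⌉
  refine (((Set.finite_Icc (-M) M).prod (Set.finite_Icc 1 N)).image
    fun pq : ℤ × ℕ => (pq.1 / pq.2 : ℚ)).subset ?_
  rintro r ⟨p, q, hq, hqN, hr, happrox⟩
  have hq0 : (0 : ℝ) < q := by exact_mod_cast hq
  have hpq : |(p : ℝ) / q| ≤ |ξ| + C := by
    calc |(p : ℝ) / q| = |ξ - (ξ - p / q)| := by ring_nf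
      _ ≤ |ξ| + |ξ - p / q| := abs_sub _ _
      _ ≤ |ξ| + C := by gcongr
  have hC : 0 ≤ |ξ| + C := (abs_nonneg _).trans hpq
  have hp : |(p : ℝ)| ≤ M := by
    rw [abs_div, Nat.abs_cast, div_le_iff₀ hq0] at hpq
    calc |(p : ℝ)| ≤ (|ξ| + C) * q := hpq
      _ ≤ (|ξ| + C) * N := by gcongr
      _ ≤ M := Int.le_ceil _
  refine ⟨(p, q), ⟨abs_le.mp (by exact_mod_cast hp), hq, hqN⟩, ?_⟩
  exact_mod_cast hr.symm

/-- **Hurwitz's theorem (second part).** For every `ε > 0`, the inequality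
`|(1+√5)/2 - p/q| ≤ 1/((√5+ε) q²)` has only finitely many rational solutions `p/q`
(`p ∈ ℤ`, `q ∈ ℕ`, `q ≥ 1`). -/
theorem hurwitz_golden_ratio_finitely_many_solutions (ε : ℝ) (hε : 0 < ε) :
    {r : ℚ | ∃ (p : ℤ) (q : ℕ), 1 ≤ q ∧ (r : ℝ) = (p : ℝ) / (q : ℝ) ∧
      |(1 + Real.sqrt 5) / 2 - (p : ℝ) / (q : ℝ)| ≤
        1 / ((Real.sqrt 5 + ε) * (q : ℝ) ^ 2)}.Finite := by
  refine (finite_setOf_rat_eq_div_of_abs_sub_le φ 1 ⌈1 / (ε * (√5 + ε))⌉₊).subset ?_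
  rintro r ⟨p, q, hq, hr, happrox⟩
  have hq1 : (1 : ℝ) ≤ q := by exact_mod_cast hq
  have hφψ : |φ - ψ| = √5 := by rw [goldenRatio_sub_goldenConj, abs_of_nonneg (sqrt_nonneg 5)]
  have hbound : ε * (|φ - ψ| + ε) * (q : ℝ) ^ 2 ≤ 1 := by
    refine mul_le_one_of_abs_sub_le (x := p / q) hε (by positivity) ?_ (by rwa [hφψ])
    simpa only [Int.cast_natCast] using
      one_div_sq_le_abs_goldenRatio_sub_mul_abs_goldenConj_sub p (q := q) (by omega)
  rw [hφψ] at hbound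
  refine ⟨p, q, hq, ?_, hr, happrox.trans ?_⟩
  · have : (q : ℝ) ≤ 1 / (ε * (√5 + ε)) := by
      rw [le_div_iff₀ (by positivity)]
      nlinarith
    exact_mod_cast this.trans (Nat.le_ceil _)
  · have h5 : (1 : ℝ) ≤ √5 := one_le_sqrt.mpr (by norm_num)
    rw [div_le_one (by positivity)]
    nlinarith [one_le_pow₀ (n := 2) hq1]
end
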